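/- The classes of a sequence of very radical revisions from the empty preorder have an explicit form: ∅ rad(R_1) ... rad(R_n) is equivalent to the preorder C with C(0)=Mod(R_1∧R_2∧...∧R_n), C(k)=Mod(¬R_k ∧ R_{k+1} ∧ ... ∧ R_n) for 1 ≤ k ≤ n-1, and C(n)=Mod(¬R_n). -/
import Mathlib


open Set
open scoped Classical

variable {M : Type*}

namespace BeliefRevision

/-- `minSet C P`: the minimal models of `P` according to the total preorder `C`,
i.e. `C(i) ∩ Mod(P)` for the least `i` making this nonempty. -/
noncomputable def minSet : List (Set M) → Set M → Set M
  | [], _ => ∅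
  | X :: rest, P => if (X ∩ P).Nonempty then X ∩ P else minSet rest P

/-- Equivalence of total preorders: same minimal models for every formula. -/
def equivC (C C' : List (Set M)) : Prop :=
  ∀ P : Set M, minSet C P = minSet C' P

/-- A total preorder: an ordered partition (empty classes allowed) of all models. -/
def IsPartition (C : List (Set M)) : Prop :=
  C.Pairwise Disjoint ∧ C.foldr (· ∪ ·) ∅ = Set.univ

/-- Lexicographic revision. -/
def lex (C : List (Set M)) (L : Set M) : List (Set M) :=
  C.map (· ∩ L) ++ C.map (· \ L)

/-- Refinement. -/
def refi (C : List (Set M)) (R : Set M) : List (Set M) :=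
  C.flatMap fun X => [X ∩ R, X \ R]

/-- Natural revision: `[C(i)∩P, C(0),...,C(i-1), C(i)\P, C(i+1),...,C(m)]`. -/
noncomputable def natr : List (Set M) → Set M → List (Set M)
  | [], _ => []
  | X :: rest, P =>
    if (X ∩ P).Nonempty then (X ∩ P) :: (X \ P) :: rest
    else
      match natr rest P with
      | a :: r => a :: X :: r
      | [] => [X]

/-- Severe antiwithdrawal: merge classes `0..i` where `i` is least with `C(i)∩P ≠ ∅`. -/
noncomputable def sevw : List (Set M) → Set M → List (Set M)
  | [], _ => []
  | X :: rest, P =>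
    if (X ∩ P).Nonempty then X :: rest
    else
      match sevw rest P with
      | a :: r => (X ∪ a) :: r
      | [] => [X]

/-- Restrained revision. -/
noncomputable def res : List (Set M) → Set M → List (Set M)
  | [], _ => []
  | X :: rest, P =>
    if (X ∩ P).Nonempty then
      (X ∩ P) :: (X \ P) :: rest.flatMap (fun Y => [Y ∩ P, Y \ P])
    else
      match res rest P with
      | a :: r => a :: (X ∩ P) :: (X \ P) :: r
      | [] => [X ∩ P, X \ P]

/-- Very radical revision. -/
def rad (C : List (Set M)) (P : Set M) : List (Set M) :=
  C.map (· ∩ P) ++ [C.foldr (· ∪ ·) ∅ \ P]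

/-- Severe revision: `[C(i)∩P, (C(0)∪...∪C(i))\P, C(i+1),...,C(m)]`. -/
noncomputable def sevr : List (Set M) → Set M → List (Set M)
  | [], _ => []
  | X :: rest, P =>
    if (X ∩ P).Nonempty then (X ∩ P) :: (X \ P) :: rest
    else
      match sevr rest P with
      | a :: b :: r => a :: (X ∪ b) :: r
      | l => X :: l

/-- Moderate severe revision. -/
noncomputable def msev (C : List (Set M)) (P : Set M) : List (Set M) :=
  C.map (· ∩ P) ++ (sevw C P).map (· \ P)

/-- Merge `A` with the first nonempty class of the list (helper for `psev`). -/
noncomputable def mergeJ (A : Set M) : List (Set M) → List (Set M)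
  | [] => [A]
  | Y :: r => if Y.Nonempty then (A ∪ Y) :: r else mergeJ A r

/-- Plain severe revision:
`[C(i)∩P, C(0)∪...∪(C(i)\P)∪C(j), C(j+1),...,C(m)]` with `i` least with
`C(i)∩P ≠ ∅` and `j` the least index `> i` with `C(j) ≠ ∅`. -/
noncomputable def psev : List (Set M) → Set M → List (Set M)
  | [], _ => []
  | X :: rest, P =>
    if (X ∩ P).Nonempty then (X ∩ P) :: mergeJ (X \ P) rest
    else
      match psev rest P with
      | a :: b :: r => a :: (X ∪ b) :: r
      | l => X :: l

/-- Full meet revision. -/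
noncomputable def full (C : List (Set M)) (P : Set M) : List (Set M) :=
  [minSet C P, Set.univ \ minSet C P]

/-- `maxset F [F₁,...,Fₖ]`: conjoin each `Fᵢ` in order whenever consistent. -/
noncomputable def maxset : Set M → List (Set M) → Set M
  | F, [] => F
  | F, L :: rest => maxset (if (F ∩ L).Nonempty then F ∩ L else F) rest

/-- The underformula `under(S; Lₙ,...,L₁)`. -/
noncomputable def under : Set M → List (Set M) → Set M
  | _, [] => Set.univ
  | S, L :: rest =>
    if (S ∩ L).Nonempty then L ∩ under (S ∩ L) rest else L ∪ under S rest

/-- `upTo C S = C(0) ∪ ... ∪ C(i)` where `i` is least with `C(i)∩S ≠ ∅`. -/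
noncomputable def upTo : List (Set M) → Set M → Set M
  | [], _ => ∅
  | X :: rest, S => if (X ∩ S).Nonempty then X else X ∪ upTo rest S

noncomputable def longestAux : Set M → List (Set M) → Set M
  | A, [] => A
  | A, L :: rest => if (A ∩ L).Nonempty then longestAux (A ∩ L) rest else A

/-- Longest consistent conjunction of a sequence of formulas. -/
noncomputable def longest : List (Set M) → Set M
  | [] => Set.univ
  | L :: rest => longestAux L rest

/-- `rev` is a bottom-refining revision on `(C,P)`: it is a revision
(`min(C rev(P),⊤) = min(C,P)`) and, whenever `C(0)∩Mod(P) ≠ ∅`, class zero of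
the result is `C(0)∩Mod(P)` and class one is `C(0)\Mod(P)`. -/
noncomputable def BottomRefining (rev : List (Set M) → Set M → List (Set M))
    (C : List (Set M)) (P : Set M) : Prop :=
  minSet (rev C P) Set.univ = minSet C P ∧
  ((C.getD 0 ∅ ∩ P).Nonempty →
    (rev C P).getD 0 ∅ = C.getD 0 ∅ ∩ P ∧
    (rev C P).getD 1 ∅ = C.getD 0 ∅ \ P)

lemma foldr_union_init (l : List (Set M)) (s : Set M) :
    l.foldr (· ∪ ·) s = l.foldr (· ∪ ·) ∅ ∪ s := by
  induction l with
  | nil => simp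
  | cons X r ih => simp [ih, Set.union_assoc]

lemma foldr_union_map_inter (C : List (Set M)) (P : Set M) :
    (C.map (· ∩ P)).foldr (· ∪ ·) ∅ = C.foldr (· ∪ ·) ∅ ∩ P := by
  induction C with
  | nil => simp
  | cons X r ih => simp [ih, Set.union_inter_distrib_right]

lemma U_rad (C : List (Set M)) (P : Set M) :
    (rad C P).foldr (· ∪ ·) ∅ = C.foldr (· ∪ ·) ∅ := by
  simp only [rad, List.foldr_append, List.foldr_cons, List.foldr_nil]
  rw [foldr_union_init, foldr_union_map_inter, Set.union_empty,
    Set.inter_union_diff]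

lemma foldl_rad (Rs : List (Set M)) : ∀ C : List (Set M),
    Rs.foldl rad C =
      C.map (· ∩ Rs.foldr (· ∩ ·) Set.univ) ++
        (List.range Rs.length).map (fun k =>
          (C.foldr (· ∪ ·) ∅ \ Rs.getD k Set.univ) ∩
            ((Rs.drop (k + 1)).foldr (· ∩ ·) Set.univ)) := by
  induction Rs with
  | nil =>
    intro C
    simp [List.map_id'']
  | cons R Rs ih =>
    intro C
    rw [List.foldl_cons, ih (rad C R)]
    rw [List.length_cons, List.range_succ_eq_map]
    simp only [U_rad]
    simp only [rad, List.map_append, List.map_map, List.map_cons, List.map_nil,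
      List.getD_cons_zero, List.getD_cons_succ, List.drop_succ_cons,
      List.foldr_cons, Function.comp]
    rw [List.append_assoc]
    congr 1
    apply List.map_congr_left
    intro x _
    simp [Set.inter_assoc]

/-- Explicit form of the classes of a sequence of very radical revisions from
the empty preorder: class 0 is `Mod(R₁∧...∧Rₙ)` and class `k` (for `1 ≤ k ≤ n`)
is `Mod(¬Rₖ ∧ Rₖ₊₁ ∧ ... ∧ Rₙ)`. -/
theorem rad_foldl_classes (Rs : List (Set M)) :
    equivC (Rs.foldl rad [Set.univ])
      ((Rs.foldr (· ∩ ·) Set.univ) ::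
        (List.range Rs.length).map (fun k =>
          (Rs.getD k Set.univ)ᶜ ∩ ((Rs.drop (k + 1)).foldr (· ∩ ·) Set.univ))) := by
  have h := foldl_rad Rs [Set.univ]
  simp only [List.map_cons, List.map_nil, List.foldr_cons, List.foldr_nil,
    Set.univ_inter, Set.union_empty] at h
  rw [h]
  have : ∀ k, Set.univ \ Rs.getD k Set.univ = (Rs.getD k Set.univ)ᶜ := by
    intro k; rw [Set.compl_eq_univ_diff]
  simp only [this, List.singleton_append]
  intro P
  rfl

end BeliefRevision
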